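/- arXiv:2207.06782 — 3 statements merged into one kernel-verified Lean document; each statement's English description precedes it below -/
import Mathlib

section
/- Let f(x,x_0) = Σ_{1≤i<j≤m} x_i x_j + x_0·Σ_{i=1}^m e_i x_i + Σ_{i=0}^m c_i x_i + c and g(x,x_0) = f(x,x_0) + Σ_{i=1}^m x_i + e_0 x_0 + c' with all coefficients in Z_2. Then (f,g) is a mixed Type-II/III complementary array pair of size 2^{(m)}×2: their generating functions satisfy F(z,z_0)·F(z,-z_0) + G(z,z_0)·G(z,-z_0) = 2(1-z_0^2)·∏_{k=1}^m(1+z_k^2). -/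
open MvPolynomial Finset

/-- Generating function `F(z_1,…,z_m,z_0)` of a Boolean function on `{0,1}^{m+1}`,
where the last variable plays the role of `x_0` (the Type-III variable). -/
noncomputable def genFun {n : ℕ} (f : (Fin n → ZMod 2) → ZMod 2) :
    MvPolynomial (Fin n) ℤ :=
  ∑ x : Fin n → ZMod 2,
    MvPolynomial.C ((-1 : ℤ) ^ (f x).val) * ∏ i, MvPolynomial.X i ^ (x i).val

/-- `F(z, -z_0)`: the generating function with the Type-III indeterminate negated. -/
noncomputable def genFunNegLast {m : ℕ} (f : (Fin (m + 1) → ZMod 2) → ZMod 2) :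
    MvPolynomial (Fin (m + 1)) ℤ :=
  ∑ x : Fin (m + 1) → ZMod 2,
    MvPolynomial.C ((-1 : ℤ) ^ (f x).val) *
      ∏ i, (if i = Fin.last m then -MvPolynomial.X i else MvPolynomial.X i) ^ (x i).val

/-- `(f,g)` is a mixed Type-II/III complementary array pair of size `2^{(m)}×2`,
the last variable being the Type-III one:
`F(z,z_0)F(z,-z_0) + G(z,z_0)G(z,-z_0) = 2(1-z_0^2)∏_{k=1}^m (1+z_k^2)`. -/
noncomputable def IsTypeIIIIIPair {m : ℕ} (f g : (Fin (m + 1) → ZMod 2) → ZMod 2) : Prop :=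
  genFun f * genFunNegLast f + genFun g * genFunNegLast g =
    2 * (1 - MvPolynomial.X (Fin.last m) ^ 2) *
      ∏ k : Fin m, (1 + MvPolynomial.X k.castSucc ^ 2)

namespace T23Aux

/-- sign character on `ZMod 2` -/
def sgn (u : ZMod 2) : ℤ := (-1) ^ u.val

lemma sgn_add (u v : ZMod 2) : sgn (u + v) = sgn u * sgn v := by revert u v; decide

lemma sgn_diag (u w : ZMod 2) : sgn (u + u + w) = sgn w := by revert u w; decide

lemma sgn_swap (A u v : ZMod 2) (h : u ≠ v) : sgn (A + u) = -sgn (A + v) := by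
  revert h; revert A u v; decide

lemma sgn_flip_pair (Ff u s : ZMod 2) :
    sgn (Ff + (1 + s) + u) + sgn (Ff + s + (1 + s) + u)
      = -(sgn (Ff + u) + sgn (Ff + s + u)) := by
  revert Ff u s; decide

lemma val_flip {u v : ZMod 2} (h : u ≠ v) : (u + 1).val + (v + 1).val = u.val + v.val := by
  revert h; revert u v; decide

lemma add_eq_one_of_ne {u v : ZMod 2} (h : u ≠ v) : u + v = 1 := by
  revert h; revert u v; decide

lemma add_one_ne (u : ZMod 2) : u + 1 ≠ u := by revert u; decide

variable {m : ℕ}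

/-- flip the `a`-th (castSucc) coordinate -/
def upd (x : Fin (m + 1) → ZMod 2) (a : Fin m) : Fin (m + 1) → ZMod 2 :=
  Function.update x a.castSucc (x a.castSucc + 1)

lemma upd_apply (x : Fin (m + 1) → ZMod 2) (a : Fin m) (i : Fin (m + 1)) :
    upd x a i = x i + (if i = a.castSucc then 1 else 0) := by
  unfold upd
  rcases eq_or_ne i a.castSucc with rfl | h
  · simp
  · simp [Function.update_of_ne h, h]

lemma upd_castSucc (x : Fin (m + 1) → ZMod 2) (a i : Fin m) :
    upd x a i.castSucc = x i.castSucc + (if i = a then 1 else 0) := by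
  rw [upd_apply]
  congr 1
  simp [Fin.castSucc_inj]

lemma upd_last (x : Fin (m + 1) → ZMod 2) (a : Fin m) :
    upd x a (Fin.last m) = x (Fin.last m) := by
  rw [upd_apply]
  simp [(Fin.castSucc_lt_last a).ne']

lemma upd_upd (x : Fin (m + 1) → ZMod 2) (a : Fin m) : upd (upd x a) a = x := by
  funext i
  rw [upd_apply, upd_apply]
  rcases eq_or_ne i a.castSucc with rfl | h
  · have h2 : (1 + 1 : ZMod 2) = 0 := rfl
    simp [add_assoc, h2]
  · simp [h]

/-- the quadratic form -/
def Qs (x : Fin (m + 1) → ZMod 2) : ZMod 2 :=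
  ∑ p ∈ Finset.univ.filter (fun p : Fin m × Fin m => p.1 < p.2),
    x p.1.castSucc * x p.2.castSucc

lemma Qs_upd (x : Fin (m + 1) → ZMod 2) (a : Fin m) :
    Qs (upd x a) = Qs x + ∑ j ∈ Finset.univ.erase a, x j.castSucc := by
  unfold Qs
  have expand : ∀ p ∈ Finset.univ.filter (fun p : Fin m × Fin m => p.1 < p.2),
      upd x a p.1.castSucc * upd x a p.2.castSucc
        = x p.1.castSucc * x p.2.castSucc
          + ((if p.2 = a then x p.1.castSucc else 0)
             + (if p.1 = a then x p.2.castSucc else 0)) := by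
    intro p hp
    have hlt : p.1 < p.2 := (Finset.mem_filter.mp hp).2
    rw [upd_castSucc, upd_castSucc]
    rcases eq_or_ne p.1 a with h1 | h1 <;> rcases eq_or_ne p.2 a with h2 | h2
    · exact absurd (h1.trans h2.symm) hlt.ne
    · simp [h1, h2]; ring
    · simp [h1, h2]; ring
    · simp [h1, h2]
  rw [Finset.sum_congr rfl expand, Finset.sum_add_distrib, Finset.sum_add_distrib]
  congr 1
  have e1 : (∑ p ∈ Finset.univ.filter (fun p : Fin m × Fin m => p.1 < p.2),
      (if p.2 = a then x p.1.castSucc else 0))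
      = ∑ i : Fin m, (if i < a then x i.castSucc else 0) := by
    rw [Finset.sum_filter, Fintype.sum_prod_type]
    refine Finset.sum_congr rfl fun i _ => ?_
    have : ∀ j : Fin m, (if i < j then (if j = a then x i.castSucc else 0) else 0)
        = if j = a then (if i < j then x i.castSucc else 0) else 0 := by
      intro j; split_ifs <;> rfl
    rw [Finset.sum_congr rfl fun j _ => this j, Finset.sum_ite_eq']
    simp
  have e2 : (∑ p ∈ Finset.univ.filter (fun p : Fin m × Fin m => p.1 < p.2),
      (if p.1 = a then x p.2.castSucc else 0))
      = ∑ j : Fin m, (if a < j then x j.castSucc else 0) := by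
    rw [Finset.sum_filter, Fintype.sum_prod_type]
    have : ∀ i : Fin m, (∑ j : Fin m, if i < j then (if i = a then x j.castSucc else 0) else 0)
        = if i = a then (∑ j : Fin m, if i < j then x j.castSucc else 0) else 0 := by
      intro i
      split_ifs with h
      · refine Finset.sum_congr rfl fun j _ => ?_; split_ifs <;> rfl
      · refine Finset.sum_eq_zero fun j _ => ?_; split_ifs <;> rfl
    rw [Finset.sum_congr rfl fun i _ => this i, Finset.sum_ite_eq']
    simp
  rw [e1, e2, ← Finset.sum_add_distrib]
  have e3 : ∀ i : Fin m,
      ((if i < a then x i.castSucc else 0) + (if a < i then x i.castSucc else 0))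
      = if i ≠ a then x i.castSucc else 0 := by
    intro i
    rcases lt_trichotomy i a with h | rfl | h
    · simp [h, h.ne, not_lt.mpr h.le]
    · simp
    · simp [h, h.ne', not_lt.mpr h.le]
  rw [Finset.sum_congr rfl fun i _ => e3 i, ← Finset.sum_filter, Finset.filter_ne']

lemma Ls_upd (e : Fin m → ZMod 2) (x : Fin (m + 1) → ZMod 2) (a : Fin m) :
    (∑ i, e i * upd x a i.castSucc) = (∑ i, e i * x i.castSucc) + e a := by
  have : ∀ i : Fin m, e i * upd x a i.castSucc
      = e i * x i.castSucc + (if i = a then e i else 0) := by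
    intro i; rw [upd_castSucc]; split_ifs <;> ring
  rw [Finset.sum_congr rfl fun i _ => this i, Finset.sum_add_distrib, Finset.sum_ite_eq']
  simp

lemma Cs_upd (c : Fin (m + 1) → ZMod 2) (x : Fin (m + 1) → ZMod 2) (a : Fin m) :
    (∑ i, c i * upd x a i) = (∑ i, c i * x i) + c a.castSucc := by
  have : ∀ i : Fin (m + 1), c i * upd x a i
      = c i * x i + (if i = a.castSucc then c i else 0) := by
    intro i; rw [upd_apply]; split_ifs <;> ring
  rw [Finset.sum_congr rfl fun i _ => this i, Finset.sum_add_distrib, Finset.sum_ite_eq']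
  simp

lemma sum_upd (x : Fin (m + 1) → ZMod 2) (a : Fin m) :
    (∑ i : Fin m, upd x a i.castSucc) = (∑ i : Fin m, x i.castSucc) + 1 := by
  have : ∀ i : Fin m, upd x a i.castSucc = x i.castSucc + (if i = a then 1 else 0) :=
    fun i => upd_castSucc x a i
  rw [Finset.sum_congr rfl fun i _ => this i, Finset.sum_add_distrib, Finset.sum_ite_eq']
  simp

section FlipLemmas

variable (e : Fin m → ZMod 2) (e0 : ZMod 2) (c : Fin (m + 1) → ZMod 2) (cc c' : ZMod 2)
variable (f g : (Fin (m + 1) → ZMod 2) → ZMod 2)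

lemma f_flip
    (hf : ∀ y, f y = (∑ p ∈ Finset.univ.filter (fun p : Fin m × Fin m => p.1 < p.2),
        y p.1.castSucc * y p.2.castSucc)
      + y (Fin.last m) * (∑ i, e i * y i.castSucc)
      + (∑ i, c i * y i) + cc)
    (x y : Fin (m + 1) → ZMod 2) (a : Fin m)
    (hlast : x (Fin.last m) = y (Fin.last m)) (hne : x a.castSucc ≠ y a.castSucc) :
    f (upd x a) + f (upd y a)
      = f x + f y + (1 + ((∑ j : Fin m, x j.castSucc) + ∑ j : Fin m, y j.castSucc)) := by
  have hQx := Qs_upd x a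
  have hQy := Qs_upd y a
  unfold Qs at hQx hQy
  rw [hf (upd x a), hf (upd y a), hf x, hf y, hQx, hQy, Ls_upd e x a, Ls_upd e y a,
    Cs_upd c x a, Cs_upd c y a, upd_last x a, upd_last y a, hlast]
  have hE := Finset.add_sum_erase Finset.univ
    (fun j : Fin m => x j.castSucc + y j.castSucc) (Finset.mem_univ a)
  simp only [Finset.sum_add_distrib] at hE
  have h1 : x a.castSucc + y a.castSucc = 1 := add_eq_one_of_ne hne
  have h2 : (2 : ZMod 2) = 0 := rfl
  linear_combination hE - h1 + (y (Fin.last m) * e a + c a.castSucc - 1) * h2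

lemma g_flip
    (hf : ∀ y, f y = (∑ p ∈ Finset.univ.filter (fun p : Fin m × Fin m => p.1 < p.2),
        y p.1.castSucc * y p.2.castSucc)
      + y (Fin.last m) * (∑ i, e i * y i.castSucc)
      + (∑ i, c i * y i) + cc)
    (hg : ∀ y, g y = f y + (∑ i : Fin m, y i.castSucc) + e0 * y (Fin.last m) + c')
    (x y : Fin (m + 1) → ZMod 2) (a : Fin m)
    (hlast : x (Fin.last m) = y (Fin.last m)) (hne : x a.castSucc ≠ y a.castSucc) :
    g (upd x a) + g (upd y a)
      = g x + g y + (1 + ((∑ j : Fin m, x j.castSucc) + ∑ j : Fin m, y j.castSucc)) := by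
  have hF := f_flip e c cc f hf x y a hlast hne
  rw [hg (upd x a), hg (upd y a), hg x, hg y, sum_upd x a, sum_upd y a,
    upd_last x a, upd_last y a]
  have h2 : (2 : ZMod 2) = 0 := rfl
  linear_combination hF + h2

lemma g_f_rel
    (hg : ∀ y, g y = f y + (∑ i : Fin m, y i.castSucc) + e0 * y (Fin.last m) + c')
    (x y : Fin (m + 1) → ZMod 2)
    (hlast : x (Fin.last m) = y (Fin.last m)) :
    g x + g y = f x + f y + ((∑ j : Fin m, x j.castSucc) + ∑ j : Fin m, y j.castSucc) := by
  rw [hg x, hg y, hlast]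
  have h2 : (2 : ZMod 2) = 0 := rfl
  linear_combination (e0 * y (Fin.last m) + c') * h2

end FlipLemmas

lemma genFunNegLast_eq (f : (Fin (m + 1) → ZMod 2) → ZMod 2) :
    genFunNegLast f = ∑ y : Fin (m + 1) → ZMod 2,
      MvPolynomial.C (sgn (f y) * sgn (y (Fin.last m))) * ∏ i, MvPolynomial.X i ^ (y i).val := by
  unfold genFunNegLast
  refine Finset.sum_congr rfl fun y _ => ?_
  have step : ∀ i : Fin (m + 1),
      (if i = Fin.last m then -MvPolynomial.X i
        else MvPolynomial.X i : MvPolynomial (Fin (m + 1)) ℤ) ^ (y i).val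
        = (if i = Fin.last m then MvPolynomial.C ((-1 : ℤ) ^ (y i).val) else 1)
          * MvPolynomial.X i ^ (y i).val := by
    intro i
    split_ifs with h
    · rw [neg_pow]
      congr 1
      rw [map_pow, map_neg, map_one]
    · rw [one_mul]
  rw [Finset.prod_congr rfl fun i _ => step i, Finset.prod_mul_distrib,
    Finset.prod_ite_eq' Finset.univ (Fin.last m)
      (fun i => MvPolynomial.C ((-1 : ℤ) ^ (y i).val))]
  simp only [Finset.mem_univ, if_true]
  rw [← mul_assoc, ← map_mul]
  rfl

lemma genFun_mul (f : (Fin (m + 1) → ZMod 2) → ZMod 2) :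
    genFun f * genFunNegLast f
      = ∑ p : ((Fin (m + 1) → ZMod 2) × (Fin (m + 1) → ZMod 2)),
          MvPolynomial.C (sgn (f p.1 + f p.2 + p.2 (Fin.last m)))
            * ∏ i, MvPolynomial.X i ^ ((p.1 i).val + (p.2 i).val) := by
  rw [genFunNegLast_eq]
  unfold genFun
  rw [Fintype.sum_mul_sum, Fintype.sum_prod_type]
  refine Finset.sum_congr rfl fun x _ => Finset.sum_congr rfl fun y _ => ?_
  have hM : (∏ i, MvPolynomial.X (R := ℤ) i ^ (x i).val) * ∏ i, MvPolynomial.X i ^ (y i).val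
      = ∏ i, MvPolynomial.X (R := ℤ) i ^ ((x i).val + (y i).val) := by
    rw [← Finset.prod_mul_distrib]
    exact Finset.prod_congr rfl fun i _ => (pow_add _ _ _).symm
  simp only [sgn_add]
  unfold sgn
  simp only [map_mul]
  rw [← hM]
  ring

lemma zmod2_sum (h : ZMod 2 → MvPolynomial (Fin (m + 1)) ℤ) :
    ∑ v : ZMod 2, h v = h 0 + h 1 := by
  have : (Finset.univ : Finset (ZMod 2)) = {0, 1} := by decide
  rw [this, Finset.sum_pair (by decide)]

lemma diag_eq :
    (∑ x : Fin (m + 1) → ZMod 2,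
      MvPolynomial.C (2 * sgn (x (Fin.last m))) * ∏ i, (MvPolynomial.X i ^ 2) ^ (x i).val)
    = 2 * (1 - MvPolynomial.X (Fin.last m) ^ 2)
        * ∏ k : Fin m, (1 + MvPolynomial.X k.castSucc ^ 2) := by
  set t : Fin (m + 1) → ZMod 2 → MvPolynomial (Fin (m + 1)) ℤ :=
    fun i v => (if i = Fin.last m then MvPolynomial.C (sgn v) else 1)
      * (MvPolynomial.X i ^ 2) ^ v.val with ht
  have step1 : ∀ x : Fin (m + 1) → ZMod 2,
      MvPolynomial.C (2 * sgn (x (Fin.last m))) * ∏ i, (MvPolynomial.X i ^ 2) ^ (x i).val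
        = MvPolynomial.C 2 * ∏ i, t i (x i) := by
    intro x
    rw [ht]
    simp only
    rw [Finset.prod_mul_distrib,
      Finset.prod_ite_eq' Finset.univ (Fin.last m) (fun i => MvPolynomial.C (sgn (x i)))]
    simp only [Finset.mem_univ, if_true]
    rw [map_mul, mul_assoc]
  rw [Finset.sum_congr rfl fun x _ => step1 x, ← Finset.mul_sum]
  have step2 : (∑ x : Fin (m + 1) → ZMod 2, ∏ i, t i (x i))
      = ∏ i, ∑ v : ZMod 2, t i v := by
    rw [Finset.prod_univ_sum (fun _ => (Finset.univ : Finset (ZMod 2))) t,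
      Fintype.piFinset_univ]
  rw [step2]
  have step3 : ∀ i : Fin (m + 1), (∑ v : ZMod 2, t i v)
      = if i = Fin.last m then 1 - MvPolynomial.X i ^ 2 else 1 + MvPolynomial.X i ^ 2 := by
    intro i
    rw [zmod2_sum, ht]
    simp only
    have h0 : sgn (0 : ZMod 2) = 1 := by decide
    have h1 : sgn (1 : ZMod 2) = -1 := by decide
    have v0 : (0 : ZMod 2).val = 0 := rfl
    have v1 : (1 : ZMod 2).val = 1 := rfl
    rw [h0, h1, v0, v1, pow_zero, pow_one, map_one, map_neg, map_one]
    split_ifs with h <;> ring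
  rw [Finset.prod_congr rfl fun i _ => step3 i, Fin.prod_univ_castSucc]
  have step4 : ∀ k : Fin m,
      (if (k.castSucc : Fin (m + 1)) = Fin.last m then
          1 - MvPolynomial.X (R := ℤ) k.castSucc ^ 2 else 1 + MvPolynomial.X k.castSucc ^ 2)
        = 1 + MvPolynomial.X k.castSucc ^ 2 := by
    intro k
    rw [if_neg (Fin.castSucc_lt_last k).ne]
  rw [Finset.prod_congr rfl fun k _ => step4 k, if_pos rfl]
  have : (MvPolynomial.C 2 : MvPolynomial (Fin (m + 1)) ℤ) = 2 := by simp
  rw [this]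
  ring

lemma min'_eq {α : Type*} [LinearOrder α] {S T : Finset α} (h : S = T)
    (hS : S.Nonempty) (hT : T.Nonempty) : S.min' hS = T.min' hT := by
  subst h; rfl

/-- the involution on off-diagonal pairs -/
def iota (p : (Fin (m + 1) → ZMod 2) × (Fin (m + 1) → ZMod 2)) :
    (Fin (m + 1) → ZMod 2) × (Fin (m + 1) → ZMod 2) :=
  if p.1 (Fin.last m) = p.2 (Fin.last m) then
    if h : (Finset.univ.filter fun i : Fin m => p.1 i.castSucc ≠ p.2 i.castSucc).Nonempty then
      (upd p.1 ((Finset.univ.filter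
          fun i : Fin m => p.1 i.castSucc ≠ p.2 i.castSucc).min' h),
       upd p.2 ((Finset.univ.filter
          fun i : Fin m => p.1 i.castSucc ≠ p.2 i.castSucc).min' h))
    else p
  else (p.2, p.1)

lemma iota_of_last_ne {p : (Fin (m + 1) → ZMod 2) × (Fin (m + 1) → ZMod 2)}
    (h : p.1 (Fin.last m) ≠ p.2 (Fin.last m)) : iota p = (p.2, p.1) := by
  rw [iota, if_neg h]

lemma nonempty_diffset {x y : Fin (m + 1) → ZMod 2} (hne : x ≠ y)
    (hlast : x (Fin.last m) = y (Fin.last m)) :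
    (Finset.univ.filter fun i : Fin m => x i.castSucc ≠ y i.castSucc).Nonempty := by
  obtain ⟨i, hi⟩ := Function.ne_iff.mp hne
  have hil : i ≠ Fin.last m := fun h => hi (h ▸ hlast)
  obtain ⟨j, rfl⟩ := Fin.exists_castSucc_eq.mpr hil
  exact ⟨j, Finset.mem_filter.mpr ⟨Finset.mem_univ j, hi⟩⟩

lemma iota_of_last_eq {x y : Fin (m + 1) → ZMod 2} (hne : x ≠ y)
    (hlast : x (Fin.last m) = y (Fin.last m)) :
    iota (x, y) = (upd x ((Finset.univ.filter
        fun i : Fin m => x i.castSucc ≠ y i.castSucc).min' (nonempty_diffset hne hlast)),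
      upd y ((Finset.univ.filter
        fun i : Fin m => x i.castSucc ≠ y i.castSucc).min' (nonempty_diffset hne hlast))) := by
  rw [iota, if_pos hlast, dif_pos (nonempty_diffset hne hlast)]

lemma diffset_upd (x y : Fin (m + 1) → ZMod 2) (a : Fin m) :
    (Finset.univ.filter fun i : Fin m => upd x a i.castSucc ≠ upd y a i.castSucc)
      = Finset.univ.filter fun i : Fin m => x i.castSucc ≠ y i.castSucc := by
  refine Finset.filter_congr fun i _ => ?_
  rw [upd_castSucc, upd_castSucc]
  constructor
  · intro h hxy; exact h (by rw [hxy])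
  · intro h hxy; exact h (by exact add_right_cancel hxy)

end T23Aux

open T23Aux

theorem typeIIIII_of_standard_form (m : ℕ) (e : Fin m → ZMod 2) (e0 : ZMod 2)
    (c : Fin (m + 1) → ZMod 2) (cc c' : ZMod 2)
    (f g : (Fin (m + 1) → ZMod 2) → ZMod 2)
    (hf : ∀ y, f y = (∑ p ∈ Finset.univ.filter (fun p : Fin m × Fin m => p.1 < p.2),
        y p.1.castSucc * y p.2.castSucc)
      + y (Fin.last m) * (∑ i, e i * y i.castSucc)
      + (∑ i, c i * y i) + cc)
    (hg : ∀ y, g y = f y + (∑ i : Fin m, y i.castSucc) + e0 * y (Fin.last m) + c') :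
    IsTypeIIIIIPair f g := by
  unfold IsTypeIIIIIPair
  rw [genFun_mul f, genFun_mul g, ← Finset.sum_add_distrib]
  set F : ((Fin (m + 1) → ZMod 2) × (Fin (m + 1) → ZMod 2)) → MvPolynomial (Fin (m + 1)) ℤ :=
    fun p => MvPolynomial.C (sgn (f p.1 + f p.2 + p.2 (Fin.last m))
        + sgn (g p.1 + g p.2 + p.2 (Fin.last m)))
      * ∏ i, MvPolynomial.X i ^ ((p.1 i).val + (p.2 i).val) with hF
  have hcomb : ∀ p ∈ (Finset.univ :
      Finset ((Fin (m + 1) → ZMod 2) × (Fin (m + 1) → ZMod 2))),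
      (MvPolynomial.C (sgn (f p.1 + f p.2 + p.2 (Fin.last m)))
          * ∏ i, MvPolynomial.X i ^ ((p.1 i).val + (p.2 i).val))
        + (MvPolynomial.C (sgn (g p.1 + g p.2 + p.2 (Fin.last m)))
          * ∏ i, MvPolynomial.X i ^ ((p.1 i).val + (p.2 i).val)) = F p := by
    intro p _
    rw [hF]
    simp only
    rw [← add_mul, ← map_add]
  rw [Finset.sum_congr rfl hcomb,
    ← Finset.sum_filter_add_sum_filter_not Finset.univ (fun p => p.1 = p.2) F]
  have hdiag : (∑ p ∈ Finset.univ.filter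
      (fun p : ((Fin (m + 1) → ZMod 2) × (Fin (m + 1) → ZMod 2)) => p.1 = p.2), F p)
      = ∑ x : Fin (m + 1) → ZMod 2,
        MvPolynomial.C (2 * sgn (x (Fin.last m))) * ∏ i, (MvPolynomial.X i ^ 2) ^ (x i).val := by
    refine Finset.sum_bij' (fun p _ => p.1) (fun x _ => (x, x)) ?_ ?_ ?_ ?_ ?_
    · intro a _; exact Finset.mem_univ _
    · intro x _
      exact Finset.mem_filter.mpr ⟨Finset.mem_univ _, rfl⟩
    · rintro ⟨p1, p2⟩ hp
      have h12 : p1 = p2 := (Finset.mem_filter.mp hp).2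
      subst h12
      rfl
    · intro x _; rfl
    · intro p hp
      have hpp : p.2 = p.1 := ((Finset.mem_filter.mp hp).2).symm
      rw [hF]
      simp only
      rw [hpp, sgn_diag, sgn_diag]
      congr 1
      · rw [two_mul]
      · refine Finset.prod_congr rfl fun i _ => ?_
        rw [← pow_mul, two_mul]
  have hoff : (∑ p ∈ Finset.univ.filter
      (fun p : ((Fin (m + 1) → ZMod 2) × (Fin (m + 1) → ZMod 2)) => ¬p.1 = p.2), F p)
      = 0 := by
    refine Finset.sum_involution (fun p _ => iota p) ?_ ?_ ?_ ?_
    · -- F p + F (iota p) = 0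
      intro p hp
      have hne : p.1 ≠ p.2 := (Finset.mem_filter.mp hp).2
      obtain ⟨x, y⟩ := p
      simp only at hne
      show F (x, y) + F (iota (x, y)) = 0
      by_cases hlast : x (Fin.last m) = y (Fin.last m)
      · -- flip case
        set a := (Finset.univ.filter
          fun i : Fin m => x i.castSucc ≠ y i.castSucc).min' (nonempty_diffset hne hlast)
          with ha
        have hamem : a ∈ Finset.univ.filter
            fun i : Fin m => x i.castSucc ≠ y i.castSucc :=
          Finset.min'_mem _ _
        have hane : x a.castSucc ≠ y a.castSucc := (Finset.mem_filter.mp hamem).2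
        rw [iota_of_last_eq hne hlast, ← ha, hF]
        simp only
        have hMeq : ∀ i : Fin (m + 1),
            (upd x a i).val + (upd y a i).val = (x i).val + (y i).val := by
          intro i
          rw [upd_apply, upd_apply]
          rcases eq_or_ne i a.castSucc with rfl | h
          · simp only [if_pos rfl]
            exact val_flip hane
          · simp [h]
        have hsf := f_flip e c cc f hf x y a hlast hane
        have hsg := g_flip e e0 c cc c' f g hf hg x y a hlast hane
        have hrel := g_f_rel e0 c' f g hg x y hlast
        have hwt : sgn (f (upd x a) + f (upd y a) + upd y a (Fin.last m))
              + sgn (g (upd x a) + g (upd y a) + upd y a (Fin.last m))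
            = -(sgn (f x + f y + y (Fin.last m)) + sgn (g x + g y + y (Fin.last m))) := by
          rw [upd_last, hsf, hsg, hrel]
          exact sgn_flip_pair (f x + f y) (y (Fin.last m))
            ((∑ j : Fin m, x j.castSucc) + ∑ j : Fin m, y j.castSucc)
        have hMM : (∏ i, MvPolynomial.X (R := ℤ) i ^ ((upd x a i).val + (upd y a i).val))
            = ∏ i, MvPolynomial.X (R := ℤ) i ^ ((x i).val + (y i).val) :=
          Finset.prod_congr rfl fun i _ => by rw [hMeq i]
        rw [hMM, hwt, map_neg]
        ring
      · -- swap case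
        rw [iota_of_last_ne hlast, hF]
        simp only
        have hM : (∏ i, MvPolynomial.X (R := ℤ) i ^ ((y i).val + (x i).val))
            = ∏ i, MvPolynomial.X (R := ℤ) i ^ ((x i).val + (y i).val) :=
          Finset.prod_congr rfl fun i _ => by rw [Nat.add_comm ((y i).val) ((x i).val)]
        have hwf : sgn (f y + f x + x (Fin.last m))
            = -sgn (f x + f y + y (Fin.last m)) := by
          rw [add_comm (f y) (f x)]
          exact sgn_swap (f x + f y) _ _ hlast
        have hwg : sgn (g y + g x + x (Fin.last m))
            = -sgn (g x + g y + y (Fin.last m)) := by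
          rw [add_comm (g y) (g x)]
          exact sgn_swap (g x + g y) _ _ hlast
        rw [hM, hwf, hwg]
        simp only [map_add, map_neg]
        ring
    · -- no fixed points (when F p ≠ 0)
      intro p hp _
      have hne : p.1 ≠ p.2 := (Finset.mem_filter.mp hp).2
      obtain ⟨x, y⟩ := p
      simp only at hne
      show iota (x, y) ≠ (x, y)
      by_cases hlast : x (Fin.last m) = y (Fin.last m)
      · rw [iota_of_last_eq hne hlast]
        intro hcon
        have := congrFun (congrArg Prod.fst hcon) ((Finset.univ.filter
          fun i : Fin m => x i.castSucc ≠ y i.castSucc).min'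
            (nonempty_diffset hne hlast)).castSucc
        rw [upd] at this
        simp only [Function.update_self] at this
        exact add_one_ne _ this
      · rw [iota_of_last_ne hlast]
        intro hcon
        exact hne (congrArg Prod.snd hcon)
    · -- membership
      intro p hp
      have hne : p.1 ≠ p.2 := (Finset.mem_filter.mp hp).2
      obtain ⟨x, y⟩ := p
      simp only at hne
      show iota (x, y) ∈ _
      refine Finset.mem_filter.mpr ⟨Finset.mem_univ _, ?_⟩
      by_cases hlast : x (Fin.last m) = y (Fin.last m)
      · rw [iota_of_last_eq hne hlast]
        set a := (Finset.univ.filter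
          fun i : Fin m => x i.castSucc ≠ y i.castSucc).min' (nonempty_diffset hne hlast)
          with ha
        have hamem : a ∈ Finset.univ.filter
            (fun i : Fin m => x i.castSucc ≠ y i.castSucc) :=
          Finset.min'_mem _ _
        have hane : x a.castSucc ≠ y a.castSucc := (Finset.mem_filter.mp hamem).2
        simp only
        intro hcon
        have hq := congrFun hcon a.castSucc
        rw [upd_castSucc, upd_castSucc] at hq
        simp only [if_pos rfl] at hq
        exact hane (add_right_cancel hq)
      · rw [iota_of_last_ne hlast]
        simp only
        exact fun h => hne h.symm
    · -- involution
      intro p hp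
      have hne : p.1 ≠ p.2 := (Finset.mem_filter.mp hp).2
      obtain ⟨x, y⟩ := p
      simp only at hne
      show iota (iota (x, y)) = (x, y)
      by_cases hlast : x (Fin.last m) = y (Fin.last m)
      · rw [iota_of_last_eq hne hlast]
        set a := (Finset.univ.filter
          fun i : Fin m => x i.castSucc ≠ y i.castSucc).min' (nonempty_diffset hne hlast)
          with ha
        have hamem : a ∈ Finset.univ.filter
            (fun i : Fin m => x i.castSucc ≠ y i.castSucc) :=
          Finset.min'_mem _ _
        have hane : x a.castSucc ≠ y a.castSucc := (Finset.mem_filter.mp hamem).2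
        have hne' : upd x a ≠ upd y a := by
          intro hcon
          have hq := congrFun hcon a.castSucc
          rw [upd_castSucc, upd_castSucc] at hq
          simp only [if_pos rfl] at hq
          exact hane (add_right_cancel hq)
        have hlast' : upd x a (Fin.last m) = upd y a (Fin.last m) := by
          rw [upd_last, upd_last, hlast]
        rw [iota_of_last_eq hne' hlast']
        have hsets := diffset_upd x y a
        have hmin : (Finset.univ.filter fun i : Fin m =>
            upd x a i.castSucc ≠ upd y a i.castSucc).min' (nonempty_diffset hne' hlast')
            = (Finset.univ.filter fun i : Fin m =>
              x i.castSucc ≠ y i.castSucc).min' (nonempty_diffset hne hlast) :=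
          min'_eq hsets _ _
        rw [hmin, ← ha]
        exact congrArg₂ Prod.mk (upd_upd x a) (upd_upd y a)
      · rw [iota_of_last_ne (p := (x, y)) hlast]
        rw [iota_of_last_ne (p := (y, x)) (fun h => hlast h.symm)]
  rw [hdiag, hoff, add_zero, diag_eq]
end

section
/- If Boolean functions f,g : {0,1}^{m+1} → Z_2 form a mixed Type-II/III complementary array pair of size 2^{(m)}×2 (with x_0 the Type-III variable), then there exist e_0,...,e_m, c_0,...,c_m, c, c' ∈ Z_2 such that f(x,x_0) = Σ_{1≤i<j≤m} x_i x_j + x_0·Σ_{i=1}^m e_i x_i + Σ_{i=0}^m c_i x_i + c and g(x,x_0) = f(x,x_0) + Σ_{i=1}^m x_i + e_0 x_0 + c'. -/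
open MvPolynomial Finset

/-!
Substituting a polynomial variable for `z_0` writes `F = F₀ + F₁ z_0`, where `F_t` is the
generating function of the restriction of `f` to `x_0 = t`; the defining identity then reads
`F₀² + G₀² - (F₁² + G₁²) z_0² = P (1 - z_0²)` with `P = 2∏(1 + z_k²)`, so both restrictions are
Type-II pairs. Type-II pairs are standard by induction on the number of variables: splitting off the
last one gives `U₀² + V₀² = U₁² + V₁² = P` and `U₀U₁ + V₀V₁ = 0`, which over the domain `ℤ[z]`
forces `(U₁, V₁) = ±(V₀, -U₀)`, i.e. `u₁ = v₀ + τ` and `v₁ = u₀ + τ + 1`. Gluing the standard forms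
of the two restrictions gives the mixed one.
-/

namespace ComplementaryArrays

variable {n : ℕ}

def restrictLast (u : (Fin (n + 1) → ZMod 2) → ZMod 2) (t : ZMod 2) :
    (Fin n → ZMod 2) → ZMod 2 :=
  fun x => u (Fin.snoc x t)

lemma forall_snoc_zero_one {P : (Fin (n + 1) → ZMod 2) → Prop} :
    (∀ y, P y) ↔ ∀ x, P (Fin.snoc x 0) ∧ P (Fin.snoc x 1) := by
  refine ⟨fun h x => ⟨h _, h _⟩, fun h y => ?_⟩
  rw [← Fin.snoc_init_self y]
  obtain h0 | h1 : y (Fin.last n) = 0 ∨ y (Fin.last n) = 1 := by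
    generalize y (Fin.last n) = t; revert t; decide
  · rw [h0]; exact (h _).1
  · rw [h1]; exact (h _).2

lemma sum_zmod_two {M : Type*} [AddCommMonoid M] (h : ZMod 2 → M) :
    ∑ t, h t = h 0 + h 1 :=
  Fin.sum_univ_two h

lemma coeff_genFun (u : (Fin n → ZMod 2) → ZMod 2) (x : Fin n → ZMod 2) :
    coeff (Finsupp.indicator univ fun i _ => (x i).val) (genFun u) = (-1) ^ (u x).val := by
  classical
  have hinj : ∀ y : Fin n → ZMod 2, (Finsupp.indicator univ fun i _ => (x i).val) =
      Finsupp.indicator univ (fun i _ => (y i).val) ↔ y = x := fun y => by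
    simp [DFunLike.ext_iff, Finsupp.indicator_apply, funext_iff, (ZMod.val_injective 2).eq_iff,
      eq_comm]
  simp only [genFun, coeff_sum, coeff_C_mul, coeff_prod_X_pow, hinj, mul_ite, mul_one, mul_zero,
    Finset.sum_ite_eq', Finset.mem_univ, if_true]

lemma genFun_injective : Function.Injective (genFun (n := n)) := by
  intro u v h
  funext x
  have := congrArg (coeff (Finsupp.indicator univ fun i _ => (x i).val)) h
  rw [coeff_genFun, coeff_genFun] at this
  revert this; generalize u x = a; generalize v x = b; revert a b; decide

lemma genFun_add_one (u : (Fin n → ZMod 2) → ZMod 2) :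
    genFun (fun x => u x + 1) = -genFun u := by
  have : ∀ a : ZMod 2, (-1 : ℤ) ^ (a + 1).val = -(-1) ^ a.val := by decide
  simp [genFun, this, ← Finset.sum_neg_distrib]

lemma genFun_ne_zero (u : (Fin n → ZMod 2) → ZMod 2) : genFun u ≠ 0 := by
  intro h
  have : (fun x => u x + 1) = u := genFun_injective (by rw [genFun_add_one, h, neg_zero])
  have := congrFun this 0
  revert this; generalize u 0 = a; revert a; decide

section evalLast

variable {R : Type*} [CommRing R]

/-- Regards `z_0` as the variable of a univariate polynomial over `R[z_1, …, z_m]` and substitutes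
`T` for it. -/
noncomputable def evalLast (T : Polynomial (MvPolynomial (Fin n) R)) :
    MvPolynomial (Fin (n + 1)) R →ₐ[R] Polynomial (MvPolynomial (Fin n) R) :=
  aeval (Fin.lastCases T fun j => Polynomial.C (X j))

@[simp]
lemma evalLast_X_last (T : Polynomial (MvPolynomial (Fin n) R)) :
    evalLast T (X (Fin.last n)) = T := by
  simp [evalLast]

@[simp]
lemma evalLast_X_castSucc (T : Polynomial (MvPolynomial (Fin n) R)) (j : Fin n) :
    evalLast T (X j.castSucc) = Polynomial.C (X j) := by
  simp [evalLast]

lemma evalLast_comp_aeval_neg_X_last (T : Polynomial (MvPolynomial (Fin n) R)) :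
    (evalLast T).comp (aeval fun i => if i = Fin.last n then -X i else X i) = evalLast (-T) := by
  refine algHom_ext fun i => ?_
  induction i using Fin.lastCases <;> simp [(Fin.castSucc_lt_last _).ne]

end evalLast

lemma genFunNegLast_eq_aeval (u : (Fin (n + 1) → ZMod 2) → ZMod 2) :
    genFunNegLast u = aeval (fun i => if i = Fin.last n then -X i else X i) (genFun u) := by
  simp [genFunNegLast, genFun, map_sum, map_prod]

lemma evalLast_genFun (T : Polynomial (MvPolynomial (Fin n) ℤ))
    (u : (Fin (n + 1) → ZMod 2) → ZMod 2) :
    evalLast T (genFun u) =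
      Polynomial.C (genFun (restrictLast u 0)) + Polynomial.C (genFun (restrictLast u 1)) * T := by
  simp only [genFun, map_sum, map_mul, map_prod, map_pow]
  rw [← (Fin.snocEquiv fun _ => ZMod 2).sum_comp, Fintype.sum_prod_type, sum_zmod_two]
  simp [Fin.snocEquiv, Fin.prod_univ_castSucc, restrictLast, Finset.sum_mul, mul_assoc,
    ZMod.val_one]

lemma evalLast_genFunNegLast (T : Polynomial (MvPolynomial (Fin n) ℤ))
    (u : (Fin (n + 1) → ZMod 2) → ZMod 2) :
    evalLast T (genFunNegLast u) = evalLast (-T) (genFun u) := by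
  rw [genFunNegLast_eq_aeval, ← AlgHom.comp_apply, evalLast_comp_aeval_neg_X_last]

section Coefficients

variable {R : Type*} [CommRing R]

lemma coeffs_eq_zero_of_quadratic_eq_zero {a b c : R}
    (h : Polynomial.C a + Polynomial.C b * Polynomial.X + Polynomial.C c * Polynomial.X ^ 2 = 0) :
    a = 0 ∧ b = 0 ∧ c = 0 := by
  refine ⟨?_, ?_, ?_⟩
  · simpa using congrArg (Polynomial.coeff · 0) h
  · simpa using congrArg (Polynomial.coeff · 1) h
  · simpa using congrArg (Polynomial.coeff · 2) h

lemma coeffs_of_sq_add_sq_eq_mul_one_add_X_sq {a₀ a₁ b₀ b₁ p : R}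
    (h : (Polynomial.C a₀ + Polynomial.C a₁ * Polynomial.X) *
          (Polynomial.C a₀ + Polynomial.C a₁ * Polynomial.X) +
        (Polynomial.C b₀ + Polynomial.C b₁ * Polynomial.X) *
          (Polynomial.C b₀ + Polynomial.C b₁ * Polynomial.X) =
      Polynomial.C p * (1 + Polynomial.X ^ 2)) :
    a₀ * a₀ + b₀ * b₀ = p ∧ 2 * (a₀ * a₁ + b₀ * b₁) = 0 ∧ a₁ * a₁ + b₁ * b₁ = p := by
  obtain ⟨h₀, h₁, h₂⟩ := coeffs_eq_zero_of_quadratic_eq_zero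
    (a := a₀ * a₀ + b₀ * b₀ - p) (b := 2 * (a₀ * a₁ + b₀ * b₁)) (c := a₁ * a₁ + b₁ * b₁ - p)
    (by simp only [map_add, map_sub, map_mul, map_ofNat]; linear_combination h)
  exact ⟨sub_eq_zero.mp h₀, h₁, sub_eq_zero.mp h₂⟩

lemma coeffs_of_mul_neg_add_mul_neg_eq_mul_one_sub_X_sq {a₀ a₁ b₀ b₁ p : R}
    (h : (Polynomial.C a₀ + Polynomial.C a₁ * Polynomial.X) *
          (Polynomial.C a₀ + Polynomial.C a₁ * -Polynomial.X) +
        (Polynomial.C b₀ + Polynomial.C b₁ * Polynomial.X) *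
          (Polynomial.C b₀ + Polynomial.C b₁ * -Polynomial.X) =
      Polynomial.C p * (1 - Polynomial.X ^ 2)) :
    a₀ * a₀ + b₀ * b₀ = p ∧ a₁ * a₁ + b₁ * b₁ = p := by
  obtain ⟨h₀, -, h₂⟩ := coeffs_eq_zero_of_quadratic_eq_zero
    (a := a₀ * a₀ + b₀ * b₀ - p) (b := 0) (c := p - (a₁ * a₁ + b₁ * b₁))
    (by simp only [map_add, map_sub, map_mul, map_zero]; linear_combination h)
  exact ⟨sub_eq_zero.mp h₀, (sub_eq_zero.mp h₂).symm⟩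

lemma eq_perp_or_eq_neg_perp [IsDomain R] {a₀ a₁ b₀ b₁ p : R}
    (hb₀ : b₀ ≠ 0) (hp : p ≠ 0) (h₀ : a₀ * a₀ + b₀ * b₀ = p) (h₁ : a₁ * a₁ + b₁ * b₁ = p)
    (hperp : a₀ * a₁ + b₀ * b₁ = 0) :
    (a₁ = b₀ ∧ b₁ = -a₀) ∨ (a₁ = -b₀ ∧ b₁ = a₀) := by
  have : (a₁ - b₀) * (a₁ + b₀) * p = 0 := by
    linear_combination (-(a₁ * a₁)) * h₀ + b₀ * b₀ * h₁ + (a₀ * a₁ - b₀ * b₁) * hperp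
  rcases mul_eq_zero.mp ((mul_eq_zero.mp this).resolve_right hp) with h | h
  · have : b₀ * (a₀ + b₁) = 0 := by linear_combination hperp - a₀ * h
    exact .inl ⟨by linear_combination h,
      by linear_combination (mul_eq_zero.mp this).resolve_left hb₀⟩
  · have : b₀ * (b₁ - a₀) = 0 := by linear_combination hperp - a₀ * h
    exact .inr ⟨by linear_combination h,
      by linear_combination (mul_eq_zero.mp this).resolve_left hb₀⟩

end Coefficients

noncomputable def IsTypeIIPair (u v : (Fin n → ZMod 2) → ZMod 2) : Prop :=
  genFun u * genFun u + genFun v * genFun v = 2 * ∏ k : Fin n, (1 + X k ^ 2)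

lemma two_mul_prod_one_add_X_sq_ne_zero (n : ℕ) :
    (2 * ∏ k : Fin n, (1 + X k ^ 2) : MvPolynomial (Fin n) ℤ) ≠ 0 := fun h => by
  simpa [map_ofNat] using congrArg (eval 0) h

lemma evalLast_two_mul_prod_one_add_X_sq :
    evalLast Polynomial.X (2 * ∏ k : Fin (n + 1), (1 + X k ^ 2) : MvPolynomial _ ℤ) =
      Polynomial.C (2 * ∏ k : Fin n, (1 + X k ^ 2)) * (1 + Polynomial.X ^ 2) := by
  simp [Fin.prod_univ_castSucc, mul_assoc, map_ofNat]

lemma IsTypeIIPair.splitLast {u v : (Fin (n + 1) → ZMod 2) → ZMod 2} (h : IsTypeIIPair u v) :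
    IsTypeIIPair (restrictLast u 0) (restrictLast v 0) ∧
      IsTypeIIPair (restrictLast u 1) (restrictLast v 1) ∧
      genFun (restrictLast u 0) * genFun (restrictLast u 1) +
        genFun (restrictLast v 0) * genFun (restrictLast v 1) = 0 := by
  have h' := congrArg (evalLast Polynomial.X) h
  rw [map_add, map_mul, map_mul, evalLast_genFun, evalLast_genFun,
    evalLast_two_mul_prod_one_add_X_sq] at h'
  obtain ⟨h₀, h₁, h₂⟩ := coeffs_of_sq_add_sq_eq_mul_one_add_X_sq h'
  exact ⟨h₀, h₂, (mul_eq_zero.mp h₁).resolve_left two_ne_zero⟩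

lemma IsTypeIIPair.restrictLast_one_eq {u v : (Fin (n + 1) → ZMod 2) → ZMod 2}
    (h : IsTypeIIPair u v) : ∃ τ : ZMod 2,
      (∀ x, restrictLast u 1 x = restrictLast v 0 x + τ) ∧
      ∀ x, restrictLast v 1 x = restrictLast u 0 x + τ + 1 := by
  obtain ⟨h₀, h₁, hperp⟩ := h.splitLast
  rcases eq_perp_or_eq_neg_perp (genFun_ne_zero _) (two_mul_prod_one_add_X_sq_ne_zero n)
    h₀ h₁ hperp with ⟨hu, hv⟩ | ⟨hu, hv⟩
  · rw [← genFun_add_one] at hv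
    exact ⟨0, fun x => by simp [genFun_injective hu], fun x => by simp [genFun_injective hv]⟩
  · rw [← genFun_add_one] at hu
    exact ⟨1, fun x => by simp [genFun_injective hu], fun x => by rw [genFun_injective hv]; grind⟩

def quadForm (n : ℕ) (x : Fin n → ZMod 2) : ZMod 2 :=
  ∑ p ∈ univ.filter (fun p : Fin n × Fin n => p.1 < p.2), x p.1 * x p.2

lemma quadForm_snoc (x : Fin n → ZMod 2) (t : ZMod 2) :
    quadForm (n + 1) (Fin.snoc x t) = quadForm n x + (∑ j, x j) * t := by
  simp only [quadForm, Finset.sum_filter, Fintype.sum_prod_type, Fin.sum_univ_castSucc,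
    Fin.snoc_castSucc, Fin.snoc_last, Fin.castSucc_lt_castSucc_iff, Fin.castSucc_lt_last,
    if_true, lt_irrefl, if_false, add_zero, Finset.sum_add_distrib, Finset.sum_mul]
  simp [Fin.not_lt.mpr (Fin.castSucc_lt_last _).le]

theorem IsTypeIIPair.eq_standard {u v : (Fin n → ZMod 2) → ZMod 2} (h : IsTypeIIPair u v) :
    ∃ (c : Fin n → ZMod 2) (a b : ZMod 2),
      (∀ x, u x = quadForm n x + ∑ i, c i * x i + a) ∧ ∀ x, v x = u x + ∑ i, x i + b := by
  induction n with
  | zero => exact ⟨0, u 0, v 0 - u 0, fun x => by simp [quadForm, Subsingleton.elim x 0],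
      fun x => by simp [Subsingleton.elim x 0]⟩
  | succ n ih =>
    obtain ⟨τ, hu₁, hv₁⟩ := h.restrictLast_one_eq
    obtain ⟨c, a, b, hu₀, hv₀⟩ := ih h.splitLast.1
    refine ⟨Fin.snoc c (b + τ), a, b, forall_snoc_zero_one.mpr fun x => ?_,
      forall_snoc_zero_one.mpr fun x => ?_⟩
    all_goals
      specialize hu₀ x; specialize hv₀ x; specialize hu₁ x; specialize hv₁ x
      simp only [restrictLast] at hu₀ hv₀ hu₁ hv₁
      simp only [quadForm_snoc, Fin.sum_univ_castSucc, Fin.snoc_castSucc, Fin.snoc_last]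
      grind

lemma evalLast_two_mul_one_sub_X_sq_mul_prod :
    evalLast Polynomial.X (2 * (1 - X (Fin.last n) ^ 2) *
        ∏ k : Fin n, (1 + X k.castSucc ^ 2) : MvPolynomial _ ℤ) =
      Polynomial.C (2 * ∏ k : Fin n, (1 + X k ^ 2)) * (1 - Polynomial.X ^ 2) := by
  simp only [map_mul, map_ofNat, map_sub, map_one, map_pow, evalLast_X_last, map_prod, map_add,
    evalLast_X_castSucc]
  ring

lemma IsTypeIIIIIPair.isTypeIIPair_restrictLast {f g : (Fin (n + 1) → ZMod 2) → ZMod 2}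
    (h : IsTypeIIIIIPair f g) :
    IsTypeIIPair (restrictLast f 0) (restrictLast g 0) ∧
      IsTypeIIPair (restrictLast f 1) (restrictLast g 1) := by
  have h' := congrArg (evalLast Polynomial.X) h
  rw [map_add, map_mul, map_mul, evalLast_genFunNegLast, evalLast_genFunNegLast, evalLast_genFun,
    evalLast_genFun, evalLast_genFun, evalLast_genFun, evalLast_two_mul_one_sub_X_sq_mul_prod] at h'
  exact coeffs_of_mul_neg_add_mul_neg_eq_mul_one_sub_X_sq h'

end ComplementaryArrays

open ComplementaryArrays in
theorem typeIIIII_pair_is_standard (m : ℕ) (f g : (Fin (m + 1) → ZMod 2) → ZMod 2)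
    (h : IsTypeIIIIIPair f g) :
    ∃ (e : Fin m → ZMod 2) (e0 : ZMod 2) (c : Fin (m + 1) → ZMod 2) (cc c' : ZMod 2),
      (∀ y, f y = (∑ p ∈ Finset.univ.filter (fun p : Fin m × Fin m => p.1 < p.2),
          y p.1.castSucc * y p.2.castSucc)
        + y (Fin.last m) * (∑ i, e i * y i.castSucc)
        + (∑ i, c i * y i) + cc) ∧
      (∀ y, g y = f y + (∑ i : Fin m, y i.castSucc) + e0 * y (Fin.last m) + c') := by
  obtain ⟨h₀, h₁⟩ := h.isTypeIIPair_restrictLast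
  obtain ⟨c₀, a₀, b₀, hf₀, hg₀⟩ := h₀.eq_standard
  obtain ⟨c₁, a₁, b₁, hf₁, hg₁⟩ := h₁.eq_standard
  refine ⟨c₀ + c₁, b₀ + b₁, Fin.snoc c₀ (a₀ + a₁), a₀, b₀, forall_snoc_zero_one.mpr fun x => ?_,
    forall_snoc_zero_one.mpr fun x => ?_⟩
  all_goals
    specialize hf₀ x; specialize hg₀ x; specialize hf₁ x; specialize hg₁ x
    simp only [restrictLast] at hf₀ hg₀ hf₁ hg₁
    simp only [Fin.sum_univ_castSucc, Fin.snoc_castSucc, Fin.snoc_last, ← quadForm.eq_def,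
      Pi.add_apply, add_mul, Finset.sum_add_distrib]
    grind
end

section
/- If (f,g) is a mixed Type-II/III complementary array pair of size 2^{(m)}×2 and π a permutation of {1,...,m}, then the length-2^{m+1} sequence pair obtained by setting t = Σ_{k=1}^m 2^{π(k)} x_k + x_0 is a Type-III complementary sequence pair: F(z)·F(-z) + G(z)·G(-z) = 2·Σ_{j=0}^{2^{m+1}-1} (-1)^j z^{2j}. -/
open MvPolynomial Finset

noncomputable def substMap {m : ℕ} (π : Equiv.Perm (Fin m)) : Fin (m+1) → Polynomial ℤ :=
  Fin.lastCases Polynomial.X (fun k => Polynomial.X ^ (2 ^ ((π k : ℕ) + 1)))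

lemma prod_id (m : ℕ) :
    (1 - Polynomial.X ^ 2) * ∏ k : Fin m, (1 + (Polynomial.X : Polynomial ℤ) ^ (2 ^ ((k:ℕ) + 2)))
      = ∑ j ∈ Finset.range (2 ^ (m+1)), Polynomial.C ((-1:ℤ) ^ j) * Polynomial.X ^ (2 * j) := by
  induction m with
  | zero =>
    simp [Finset.sum_range_succ]
    ring
  | succ m ih =>
    rw [Fin.prod_univ_castSucc]
    simp only [Fin.coe_castSucc, Fin.val_last]
    rw [← mul_assoc, ih]
    have h2 : 2 ^ (m + 2) = 2 ^ (m + 1) + 2 ^ (m + 1) := by ring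
    rw [h2, Finset.sum_range_add]
    have : ∀ i ∈ Finset.range (2 ^ (m+1)),
        Polynomial.C ((-1:ℤ) ^ (2 ^ (m+1) + i)) * Polynomial.X ^ (2 * (2 ^ (m+1) + i))
          = (Polynomial.C ((-1:ℤ) ^ i) * Polynomial.X ^ (2 * i)) * Polynomial.X ^ (2 ^ (m+2)) := by
      intro i _
      have he : (-1:ℤ) ^ (2 ^ (m+1) + i) = (-1:ℤ) ^ i := by
        rw [pow_add]
        have : Even (2 ^ (m+1)) := by simp [Nat.even_pow]
        rw [this.neg_one_pow, one_mul]
      rw [he]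
      rw [mul_add, pow_add]
      have : 2 * 2 ^ (m+1) = 2 ^ (m+2) := by ring
      rw [this]
      ring
    rw [Finset.sum_congr rfl this, ← Finset.sum_mul]
    ring

lemma aeval_genFun (m : ℕ) (f : (Fin (m + 1) → ZMod 2) → ZMod 2) (π : Equiv.Perm (Fin m)) :
    MvPolynomial.aeval (substMap π) (genFun f)
      = ∑ y : Fin (m + 1) → ZMod 2, Polynomial.C ((-1 : ℤ) ^ (f y).val) *
        Polynomial.X ^ ((y (Fin.last m)).val +
          ∑ k : Fin m, (y k.castSucc).val * 2 ^ ((π k : ℕ) + 1)) := by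
  rw [genFun, map_sum]
  refine Finset.sum_congr rfl fun y _ => ?_
  rw [map_mul, aeval_C, map_prod]
  simp only [map_pow, aeval_X]
  rw [Fin.prod_univ_castSucc]
  simp only [substMap, Fin.lastCases_castSucc, Fin.lastCases_last, ← pow_mul]
  rw [Finset.prod_pow_eq_pow_sum]
  rw [Polynomial.algebraMap_eq]
  congr 1
  rw [← pow_add]
  congr 1
  rw [add_comm]
  congr 1
  exact Finset.sum_congr rfl fun k _ => mul_comm _ _

lemma aeval_genFunNegLast (m : ℕ) (f : (Fin (m + 1) → ZMod 2) → ZMod 2)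
    (π : Equiv.Perm (Fin m)) :
    MvPolynomial.aeval (substMap π) (genFunNegLast f)
      = (∑ y : Fin (m + 1) → ZMod 2, Polynomial.C ((-1 : ℤ) ^ (f y).val) *
        Polynomial.X ^ ((y (Fin.last m)).val +
          ∑ k : Fin m, (y k.castSucc).val * 2 ^ ((π k : ℕ) + 1))).comp (-Polynomial.X) := by
  rw [Polynomial.comp_eq_aeval, map_sum, genFunNegLast, map_sum]
  refine Finset.sum_congr rfl fun y _ => ?_
  rw [map_mul, map_mul, aeval_C, Polynomial.aeval_C]
  simp only [map_pow, Polynomial.aeval_X]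
  rw [Polynomial.algebraMap_eq]
  congr 1
  rw [map_prod, Fin.prod_univ_castSucc]
  have hcs : ∀ k : Fin m, (k.castSucc : Fin (m+1)) ≠ Fin.last m :=
    fun k => (Fin.castSucc_lt_last k).ne
  simp only [map_pow]
  simp only [if_true]
  have hfac : ∀ k : Fin m,
      (MvPolynomial.aeval (substMap π)
        ((if (k.castSucc : Fin (m+1)) = Fin.last m then -MvPolynomial.X k.castSucc
          else MvPolynomial.X k.castSucc) : MvPolynomial (Fin (m+1)) ℤ)) ^ (y k.castSucc).val
        = Polynomial.X ^ ((y k.castSucc).val * 2 ^ ((π k : ℕ) + 1)) := by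
    intro k
    rw [if_neg (hcs k), aeval_X]
    simp only [substMap, Fin.lastCases_castSucc, ← pow_mul]
    rw [mul_comm]
  rw [Finset.prod_congr rfl fun k _ => hfac k, Finset.prod_pow_eq_pow_sum]
  rw [map_neg, aeval_X]
  simp only [substMap, Fin.lastCases_last]
  have hev : Even (∑ k : Fin m, (y k.castSucc).val * 2 ^ ((π k : ℕ) + 1)) := by
    rw [even_iff_two_dvd]
    refine Finset.dvd_sum fun k _ => ?_
    exact Dvd.dvd.mul_left (dvd_pow_self 2 (Nat.succ_ne_zero _)) _
  rw [pow_add, hev.neg_pow]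
  ring

lemma aeval_rhs (m : ℕ) (π : Equiv.Perm (Fin m)) :
    MvPolynomial.aeval (substMap π)
        (2 * (1 - MvPolynomial.X (Fin.last m) ^ 2) *
          ∏ k : Fin m, (1 + MvPolynomial.X (k.castSucc) ^ 2) : MvPolynomial (Fin (m+1)) ℤ)
      = 2 * ∑ j ∈ Finset.range (2 ^ (m + 1)),
          Polynomial.C ((-1 : ℤ) ^ j) * Polynomial.X ^ (2 * j) := by
  rw [map_mul, map_mul, map_sub, map_one, map_pow, aeval_X, map_prod]
  simp only [map_add, map_one, map_pow, aeval_X]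
  simp only [substMap, Fin.lastCases_last, Fin.lastCases_castSucc, ← pow_mul]
  have hexp : ∀ k : Fin m, 2 ^ ((π k : ℕ) + 1) * 2 = 2 ^ ((π k : ℕ) + 2) := by
    intro k; ring
  simp only [hexp]
  have := Equiv.prod_comp π (fun j : Fin m => 1 + (Polynomial.X : Polynomial ℤ) ^ (2 ^ ((j:ℕ) + 2)))
  rw [this, map_ofNat, mul_assoc, prod_id]
  simp [map_pow]

/-- Projecting a mixed Type-II/III complementary array pair of size `2^{(m)}×2` by
`t = Σ_k 2^{π(k)} x_k + x_0` (i.e. `z_0 = z`, `z_k = z^{2^{π(k)}}`) yields a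
Type-III complementary sequence pair of length `2^{m+1}`. -/
theorem typeIIIII_array_to_sequence (m : ℕ) (f g : (Fin (m + 1) → ZMod 2) → ZMod 2)
    (h : IsTypeIIIIIPair f g) (π : Equiv.Perm (Fin m))
    (F G : Polynomial ℤ)
    (hF : F = ∑ y : Fin (m + 1) → ZMod 2, Polynomial.C ((-1 : ℤ) ^ (f y).val) *
        Polynomial.X ^ ((y (Fin.last m)).val +
          ∑ k : Fin m, (y k.castSucc).val * 2 ^ ((π k : ℕ) + 1)))
    (hG : G = ∑ y : Fin (m + 1) → ZMod 2, Polynomial.C ((-1 : ℤ) ^ (g y).val) *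
        Polynomial.X ^ ((y (Fin.last m)).val +
          ∑ k : Fin m, (y k.castSucc).val * 2 ^ ((π k : ℕ) + 1))) :
    F * F.comp (-Polynomial.X) + G * G.comp (-Polynomial.X) =
      2 * ∑ j ∈ Finset.range (2 ^ (m + 1)),
        Polynomial.C ((-1 : ℤ) ^ j) * Polynomial.X ^ (2 * j) := by
  rw [IsTypeIIIIIPair] at h
  have H := congrArg (MvPolynomial.aeval (substMap π)) h
  rw [map_add, map_mul, map_mul] at H
  rw [aeval_genFun m f π, aeval_genFun m g π, aeval_genFunNegLast m f π,
    aeval_genFunNegLast m g π, aeval_rhs m π] at H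
  rw [hF, hG]
  exact H
end
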